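/- For every integer r ≥ 2, one has f(r−1, 1, 1) ≤ f(r−1, 1), where the left-hand side is the three-bin value and the right-hand side is the two-bin value. -/

import Mathlib

/-
Removing the ball of a singleton bin leaves an empty bin, and empty bins do not affect `f`.
So with `g a = f (a, 1)` and `h a = f (a, 1, 1)`, one step of the process gives
`g (a + 1) = (g a + a + 1) / 2` and `h (a + 1) = (h a + 2 g (a + 1)) / 3`, while `h 0 = g 0 = 1`.
As `g a ≤ a + 1`, `g` is nondecreasing, and `h a ≤ g a` follows by induction.
-/

namespace BallsBins

/-- The set of non-empty bins of an assignment. -/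
def posBins {k : ℕ} (n : Fin k → ℕ) : Finset (Fin k) :=
  Finset.univ.filter (fun i => 0 < n i)

/-- Expected number of balls in the last non-empty bin of the uniform removal process. -/
noncomputable def f {k : ℕ} (n : Fin k → ℕ) : ℝ :=
  if (posBins n).card ≤ 1 then ((∑ i, n i : ℕ) : ℝ)
  else ((posBins n).card : ℝ)⁻¹ *
    ∑ i ∈ (posBins n).attach, f (Function.update n i.1 (n i.1 - 1))
termination_by ∑ i, n i
decreasing_by
  have hi : 0 < n i.1 := by
    have h := i.2
    simp only [posBins, Finset.mem_filter] at h
    exact h.2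
  have h1 : ∑ j, Function.update n i.1 (n i.1 - 1) j
      = (n i.1 - 1) + ∑ j ∈ Finset.univ \ {i.1}, n j :=
    Finset.sum_update_of_mem (Finset.mem_univ i.1) n (n i.1 - 1)
  have h2 : ∑ j, n j = n i.1 + ∑ j ∈ Finset.univ \ {i.1}, n j := by
    rw [Finset.sum_eq_sum_sdiff_singleton_add (Finset.mem_univ i.1)]
    ring
  omega

open Function Finset

lemma f_of_card_posBins_le_one {k : ℕ} (n : Fin k → ℕ) (h : #(posBins n) ≤ 1) :
    f n = ((∑ i, n i : ℕ) : ℝ) := by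
  rw [f, if_pos h]

lemma f_of_one_lt_card_posBins {k : ℕ} (n : Fin k → ℕ) (h : 1 < #(posBins n)) :
    f n = (#(posBins n) : ℝ)⁻¹ * ∑ i ∈ posBins n, f (update n i (n i - 1)) := by
  rw [f, if_neg h.not_ge, ← sum_attach (posBins n) (fun i => f (update n i (n i - 1)))]

lemma f_of_le_one {k : ℕ} (hk : k ≤ 1) (n : Fin k → ℕ) : f n = ((∑ i, n i : ℕ) : ℝ) :=
  f_of_card_posBins_le_one n ((card_le_univ _).trans (by simpa using hk))

lemma f_of_forall_pos {k : ℕ} (hk : 2 ≤ k) {n : Fin k → ℕ} (hn : ∀ i, 0 < n i) :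
    f n = (k : ℝ)⁻¹ * ∑ i, f (update n i (n i - 1)) := by
  have huniv : posBins n = univ := by simpa [posBins] using hn
  rw [f_of_one_lt_card_posBins n (by rwa [huniv, card_univ, Fintype.card_fin]), huniv, card_univ,
    Fintype.card_fin]

lemma sum_update_pred_lt {k : ℕ} {n : Fin k → ℕ} {i : Fin k} (hi : 0 < n i) :
    ∑ j, update n i (n i - 1) j < ∑ j, n j :=
  sum_lt_sum (fun j _ => by rcases eq_or_ne j i with rfl | hj <;> simp [*])
    ⟨i, mem_univ _, by simpa using hi⟩

lemma map_posBins_comp {j k : ℕ} {n : Fin k → ℕ} {e : Fin j → Fin k} (he : Injective e)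
    (hn : ∀ i, 0 < n i → i ∈ Set.range e) :
    (posBins (n ∘ e)).map ⟨e, he⟩ = posBins n := by
  ext i
  simp only [posBins, mem_map, mem_filter, mem_univ, true_and, Embedding.coeFn_mk, comp_apply]
  constructor
  · rintro ⟨j, hj, rfl⟩
    exact hj
  · intro hi
    obtain ⟨j, rfl⟩ := hn i hi
    exact ⟨j, hi, rfl⟩

theorem f_comp_of_injective {j k : ℕ} (n : Fin k → ℕ) {e : Fin j → Fin k} (he : Injective e)
    (hn : ∀ i, 0 < n i → i ∈ Set.range e) : f (n ∘ e) = f n := by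
  have hmap := map_posBins_comp he hn
  have hcard : #(posBins (n ∘ e)) = #(posBins n) := by rw [← hmap, card_map]
  by_cases h : #(posBins n) ≤ 1
  · rw [f_of_card_posBins_le_one _ (hcard ▸ h), f_of_card_posBins_le_one n h]
    congr 1
    exact Fintype.sum_of_injective e he _ _ (fun i hi => by_contra fun h0 => hi (hn i (by omega)))
      fun _ => rfl
  · rw [not_le] at h
    rw [f_of_one_lt_card_posBins _ (hcard ▸ h), f_of_one_lt_card_posBins n h, hcard, ← hmap,
      sum_map]
    congr 1
    refine sum_congr rfl fun i hi => ?_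
    have hpos : 0 < n (e i) := by simpa [posBins] using hi
    rw [comp_apply, ← update_comp_eq_of_injective n he]
    refine f_comp_of_injective _ he fun l hl => ?_
    rcases eq_or_ne l (e i) with rfl | hne
    · exact ⟨i, rfl⟩
    · exact hn l (by simpa [hne] using hl)
termination_by ∑ i, n i
decreasing_by exact sum_update_pred_lt hpos

theorem f_removeNth_of_eq_zero {k : ℕ} {n : Fin (k + 1) → ℕ} {p : Fin (k + 1)} (hp : n p = 0) :
    f (p.removeNth n) = f n :=
  f_comp_of_injective n Fin.succAbove_right_injective fun i hi =>
    Fin.exists_succAbove_eq (by rintro rfl; omega)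

lemma f_eq_of_removeNth_eq {k : ℕ} {n : Fin (k + 1) → ℕ} {m : Fin k → ℕ} (p : Fin (k + 1))
    (hp : n p = 0) (hm : p.removeNth n = m) : f n = f m := by
  rw [← hm, f_removeNth_of_eq_zero hp]

lemma f_pair_zero_right (a : ℕ) : f ![a, 0] = a := by
  rw [f_eq_of_removeNth_eq 1 rfl (m := ![a]) (by ext i; fin_cases i; rfl), f_of_le_one le_rfl]
  simp

lemma f_pair_zero_one : f ![0, 1] = 1 := by
  rw [f_eq_of_removeNth_eq 0 rfl (m := ![1]) (by ext i; fin_cases i; rfl), f_of_le_one le_rfl]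
  simp

lemma f_pair_succ_one (a : ℕ) : f ![a + 1, 1] = (f ![a, 1] + (a + 1)) / 2 := by
  rw [f_of_forall_pos le_rfl (by simp [Fin.forall_fin_two]), Fin.sum_univ_two,
    show ![a + 1, 1] 0 = a + 1 from rfl, show ![a + 1, 1] 1 = 1 from rfl]
  have h0 : update ![a + 1, 1] 0 (a + 1 - 1) = ![a, 1] := by ext i; fin_cases i <;> rfl
  have h1 : update ![a + 1, 1] 1 (1 - 1) = ![a + 1, 0] := by ext i; fin_cases i <;> rfl
  rw [h0, h1, f_pair_zero_right]
  push_cast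
  ring

lemma f_pair_le (a : ℕ) : f ![a, 1] ≤ a + 1 := by
  induction a with
  | zero => simp [f_pair_zero_one]
  | succ a ih =>
    rw [f_pair_succ_one]
    push_cast
    linarith

lemma f_pair_le_succ (a : ℕ) : f ![a, 1] ≤ f ![a + 1, 1] := by
  rw [f_pair_succ_one]
  linarith [f_pair_le a]

lemma f_triple_zero_one_one : f ![0, 1, 1] = f ![0, 1] := by
  rw [f_eq_of_removeNth_eq 0 rfl (m := ![0 + 1, 1]) (by ext i; fin_cases i <;> rfl),
    f_pair_succ_one, f_pair_zero_one]
  norm_num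

lemma f_triple_succ_one_one (a : ℕ) :
    f ![a + 1, 1, 1] = (f ![a, 1, 1] + 2 * f ![a + 1, 1]) / 3 := by
  rw [f_of_forall_pos (by norm_num) (by simp [Fin.forall_fin_succ]), Fin.sum_univ_three]
  have h0 : update ![a + 1, 1, 1] 0 (a + 1 - 1) = ![a, 1, 1] := by ext i; fin_cases i <;> rfl
  have h1 : f (update ![a + 1, 1, 1] 1 (1 - 1)) = f ![a + 1, 1] :=
    f_eq_of_removeNth_eq 1 rfl (by ext i; fin_cases i <;> rfl)
  have h2 : f (update ![a + 1, 1, 1] 2 (1 - 1)) = f ![a + 1, 1] :=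
    f_eq_of_removeNth_eq 2 rfl (by ext i; fin_cases i <;> rfl)
  rw [show ![a + 1, 1, 1] 0 = a + 1 from rfl, show ![a + 1, 1, 1] 1 = 1 from rfl,
    show ![a + 1, 1, 1] 2 = 1 from rfl, h0, h1, h2]
  push_cast
  ring

lemma f_triple_le_pair (a : ℕ) : f ![a, 1, 1] ≤ f ![a, 1] := by
  induction a with
  | zero => rw [f_triple_zero_one_one]
  | succ a ih =>
    rw [f_triple_succ_one_one]
    linarith [f_pair_le_succ a]

theorem three_bin_le_two_bin_general (r : ℕ) :
    f ![r - 1, 1, 1] ≤ f ![r - 1, 1] :=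
  f_triple_le_pair (r - 1)

/-- For every integer `r ≥ 2`, the three-bin value `f (r-1, 1, 1)` is at most
the two-bin value `f (r-1, 1)`. -/
theorem three_bin_le_two_bin (r : ℕ) (hr : 2 ≤ r) :
    f ![r - 1, 1, 1] ≤ f ![r - 1, 1] :=
  three_bin_le_two_bin_general r

end BallsBins
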